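/- arXiv:2102.04443 — 2 statements merged into one kernel-verified Lean document; each statement's English description precedes it below -/
import Mathlib

section
/- Let p be a prime and G a finite p-solvable group with O_{p'}(G) = 1 that contains an element of order p and in which all non-trivial p-elements are conjugate. Then P := O_p(G) is non-trivial, P is a Sylow p-subgroup of G, P is elementary abelian, and C_G(P) = P; consequently the conjugation action of G/P on P is faithful and is transitive on P ∖ {1}. -/
/-- A `p`-element of a group: an element whose order is a power of `p`. -/
def IsPElement (p : ℕ) {G : Type*} [Group G] (g : G) : Prop :=
  ∃ k : ℕ, orderOf g = p ^ k

/-- A finite group is `p`-solvable iff it has a subnormal series each of whose factors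
is either a `p`-group or a group of order coprime to `p`; equivalently, every
composition factor is a `p`-group or a `p'`-group. -/
def IsPSolvable (p : ℕ) (G : Type*) [Group G] : Prop :=
  ∃ (n : ℕ) (H : Fin (n + 1) → Subgroup G), H 0 = ⊥ ∧ H (Fin.last n) = ⊤ ∧
    ∀ i : Fin n, H i.castSucc ≤ H i.succ ∧
      ((H i.castSucc).subgroupOf (H i.succ)).Normal ∧
      ((∃ m : ℕ, (H i.castSucc).relIndex (H i.succ) = p ^ m) ∨
        ¬ p ∣ (H i.castSucc).relIndex (H i.succ))

/-- `O_p(G)`: the largest normal `p`-subgroup of a (finite) group `G`. -/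
def pCore (p : ℕ) (G : Type*) [Group G] : Subgroup G :=
  sSup {H : Subgroup G | H.Normal ∧ IsPGroup p H}

/-- `O_{p'}(G)`: the largest normal subgroup of a (finite) group `G` of order coprime
to `p`. -/
def pPrimeCore (p : ℕ) (G : Type*) [Group G] : Subgroup G :=
  sSup {H : Subgroup G | H.Normal ∧ ¬ p ∣ Nat.card H}

/-!
The first non-trivial term of a `p`-solvable series has a non-trivial `O_p` or `O_{p'}`; both
are characteristic, so this climbs up the series to `G`, and as `O_{p'}(G) = 1` we get
`P := O_p(G) ≠ 1`. Every non-trivial `p`-element is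
conjugate to a non-trivial element of the normal subgroup `P`, so all `p`-elements lie in `P`:
`P` is Sylow, and of exponent `p` as all its non-trivial elements are conjugate to one of order
`p`. They are also conjugate to a non-trivial element of the normal subgroup `Z(P)`, so `P` is
abelian. Finally `C_G(P)` is normal with central Sylow subgroup `P`, so by Burnside's transfer
theorem it has a normal `p`-complement; this lies in `O_{p'}(G) = 1`, whence `C_G(P) = P`.
-/

open Subgroup

theorem IsConj.orderOf_eq {G : Type*} [Group G] {x y : G} (h : IsConj x y) :
    orderOf x = orderOf y := by
  obtain ⟨c, rfl⟩ := isConj_iff.mp h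
  exact ((MulAut.conj c).orderOf_eq x).symm

theorem IsPGroup.isPElement {p : ℕ} [Fact p.Prime] {G : Type*} [Group G] {H : Subgroup G}
    (hH : IsPGroup p H) {x : G} (hx : x ∈ H) : IsPElement p x := by
  obtain ⟨k, hk⟩ := hH.exists_orderOf_eq_pow ⟨x, hx⟩
  exact ⟨k, by rwa [orderOf_mk] at hk⟩

namespace Subgroup

variable {X : Type*} [Group X]

theorem card_sup_of_normal_right (A B : Subgroup X) [B.Normal] :
    Nat.card ↥(A ⊔ B) = Nat.card B * B.relIndex A := by
  rw [← relIndex_bot_left, ← relIndex_mul_relIndex ⊥ B (A ⊔ B) bot_le le_sup_right,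
    relIndex_sup_right, relIndex_bot_left]

theorem sSup_setOf_normal_of_sup_closed [Finite X] {Q : Subgroup X → Prop} (hbot : Q ⊥)
    (hsup : ∀ A B : Subgroup X, [B.Normal] → Q A → Q B → Q (A ⊔ B)) :
    Q (sSup {H : Subgroup X | H.Normal ∧ Q H}) := by
  refine (Set.Finite.induction_on_subset _ (Set.toFinite _)
    (motive := fun S _ => (sSup S).Normal ∧ Q (sSup S)) ?_ ?_).2
  · rw [sSup_empty]
    exact ⟨inferInstance, hbot⟩
  · rintro H S ⟨hHn, hHQ⟩ - - ⟨hSn, hSQ⟩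
    have := hSn
    rw [sSup_insert]
    exact ⟨sup_normal H (sSup S), hsup H _ hHQ hSQ⟩

end Subgroup

section Cores

variable {p : ℕ} {X Y : Type*} [Group X] [Group Y]

theorem le_pCore {N : Subgroup X} [hN : N.Normal] (hp : IsPGroup p N) : N ≤ pCore p X :=
  le_sSup ⟨hN, hp⟩

theorem isPGroup_pCore [Finite X] : IsPGroup p (pCore p X) :=
  sSup_setOf_normal_of_sup_closed (Q := fun H => IsPGroup p H) IsPGroup.of_bot
    fun _ _ _ hA hB => hA.to_sup_of_normal_right hB

theorem map_pCore_le (e : X ≃* Y) : (pCore p X).map e.toMonoidHom ≤ pCore p Y := by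
  rw [pCore, (gc_map_comap e.toMonoidHom).l_sSup]
  exact iSup₂_le fun H hH => le_sSup ⟨hH.1.map _ e.surjective, hH.2.map _⟩

instance pCore_characteristic : (pCore p X).Characteristic :=
  characteristic_iff_map_le.mpr map_pCore_le

theorem pCore_ne_bot_of_injective [Finite X] (f : Y →* X) (hf : Function.Injective f)
    [f.range.Normal] (hY : pCore p Y ≠ ⊥) : pCore p X ≠ ⊥ := by
  have hf' : f = f.range.subtype.comp (MonoidHom.ofInjective hf).toMonoidHom := rfl
  have hle : (pCore p Y).map f ≤ pCore p X := by
    rw [hf', ← map_map]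
    exact (map_mono (map_pCore_le _)).trans (le_pCore (isPGroup_pCore.map _))
  exact fun hX => hY ((map_eq_bot_iff_of_injective _ hf).mp (le_bot_iff.mp (hX ▸ hle)))

theorem le_pPrimeCore {N : Subgroup X} [hN : N.Normal] (hp : ¬ p ∣ Nat.card N) :
    N ≤ pPrimeCore p X :=
  le_sSup ⟨hN, hp⟩

theorem map_pPrimeCore_le (e : X ≃* Y) :
    (pPrimeCore p X).map e.toMonoidHom ≤ pPrimeCore p Y := by
  rw [pPrimeCore, (gc_map_comap e.toMonoidHom).l_sSup]
  refine iSup₂_le fun H hH => le_sSup ⟨hH.1.map _ e.surjective, ?_⟩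
  rw [card_map_of_injective e.injective]
  exact hH.2

variable [Fact p.Prime]

theorem not_dvd_card_pPrimeCore [Finite X] : ¬ p ∣ Nat.card (pPrimeCore p X) := by
  refine sSup_setOf_normal_of_sup_closed (Q := fun H => ¬ p ∣ Nat.card H) ?_ ?_
  · rw [card_bot]
    exact Nat.Prime.not_dvd_one Fact.out
  · intro A B _ hA hB hAB
    rw [card_sup_of_normal_right, (Nat.Prime.dvd_mul Fact.out)] at hAB
    exact hAB.elim hB fun h => hA (h.trans (relIndex_dvd_card B A))

instance pPrimeCore_characteristic : (pPrimeCore p X).Characteristic :=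
  characteristic_iff_map_le.mpr map_pPrimeCore_le

theorem pPrimeCore_ne_bot_of_injective [Finite X] (f : Y →* X) (hf : Function.Injective f)
    [f.range.Normal] (hY : pPrimeCore p Y ≠ ⊥) : pPrimeCore p X ≠ ⊥ := by
  have hf' : f = f.range.subtype.comp (MonoidHom.ofInjective hf).toMonoidHom := rfl
  have hle : (pPrimeCore p Y).map f ≤ pPrimeCore p X := by
    rw [hf', ← map_map]
    refine (map_mono (map_pPrimeCore_le _)).trans (le_pPrimeCore ?_)
    rw [card_map_of_injective (subtype_injective _)]
    exact not_dvd_card_pPrimeCore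
  exact fun hX => hY ((map_eq_bot_iff_of_injective _ hf).mp (le_bot_iff.mp (hX ▸ hle)))

theorem IsPSolvable.pCore_ne_bot_or_pPrimeCore_ne_bot [Finite X] [Nontrivial X]
    (h : IsPSolvable p X) : pCore p X ≠ ⊥ ∨ pPrimeCore p X ≠ ⊥ := by
  obtain ⟨n, H, h0, htop, hstep⟩ := h
  suffices key : ∀ i, H i ≠ ⊥ → pCore p (H i) ≠ ⊥ ∨ pPrimeCore p (H i) ≠ ⊥ by
    have hN := key (Fin.last n) (by rw [htop]; exact top_ne_bot)
    rw [htop] at hN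
    have : (⊤ : Subgroup X).subtype.range.Normal := by rw [range_subtype]; infer_instance
    exact hN.imp (pCore_ne_bot_of_injective _ (subtype_injective _))
      (pPrimeCore_ne_bot_of_injective _ (subtype_injective _))
  intro i
  induction i using Fin.induction with
  | zero => exact fun hne => absurd h0 hne
  | succ i ih =>
    intro hne
    obtain ⟨hle, hnormal, hfactor⟩ := hstep i
    by_cases hbot : H i.castSucc = ⊥
    · have : Nontrivial (H i.succ) := (nontrivial_iff_ne_bot _).mpr hne
      rw [hbot, relIndex_bot_left] at hfactor
      have htop : (⊤ : Subgroup (H i.succ)) ≠ ⊥ := top_ne_bot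
      rcases hfactor with ⟨m, hm⟩ | hp'
      · have hB : IsPGroup p (⊤ : Subgroup (H i.succ)) := (IsPGroup.of_card hm).to_subgroup ⊤
        exact Or.inl (ne_bot_of_le_ne_bot htop (le_pCore hB))
      · exact Or.inr (ne_bot_of_le_ne_bot htop (le_pPrimeCore (by rwa [card_top])))
    · have : (inclusion hle).range.Normal := (inclusion_range hle).symm ▸ hnormal
      exact (ih hbot).imp (pCore_ne_bot_of_injective _ (inclusion_injective hle))
        (pPrimeCore_ne_bot_of_injective _ (inclusion_injective hle))

end Cores

theorem Subgroup.Normal.mem_of_isConj {G : Type*} [Group G] {N : Subgroup G} (hN : N.Normal)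
    {x y : G} (h : IsConj x y) (hx : x ∈ N) : y ∈ N := by
  obtain ⟨c, rfl⟩ := isConj_iff.mp h
  exact hN.conj_mem x hx c

section

variable {p : ℕ} [Fact p.Prime] {G : Type*} [Group G]

theorem IsPElement.pow_eq_one_of_forall_isConj
    (hconj : ∀ x y : G, IsPElement p x → IsPElement p y → x ≠ 1 → y ≠ 1 → IsConj x y)
    {g₀ : G} (hg₀ : orderOf g₀ = p) {g : G} (hg : IsPElement p g) : g ^ p = 1 := by
  have hg₀1 : g₀ ≠ 1 := fun h => (Fact.out : p.Prime).ne_one (hg₀ ▸ orderOf_eq_one_iff.mpr h)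
  by_cases hg1 : g = 1
  · rw [hg1, one_pow]
  · rw [← hg₀, ← (hconj g g₀ hg ⟨1, by rw [pow_one, hg₀]⟩ hg1 hg₀1).orderOf_eq]
    exact pow_orderOf_eq_one g

theorem Sylow.coe_eq_of_forall_isConj (Q : Sylow p G) {N : Subgroup G} [hN : N.Normal]
    (hNp : IsPGroup p N) (hN1 : N ≠ ⊥)
    (hconj : ∀ x y : G, IsPElement p x → IsPElement p y → x ≠ 1 → y ≠ 1 → IsConj x y) :
    (Q : Subgroup G) = N := by
  obtain ⟨z, hzN, hz1⟩ := N.bot_or_exists_ne_one.resolve_left hN1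
  have hmem : ∀ x, IsPElement p x → x ∈ N := fun x hx => by
    by_cases hx1 : x = 1
    · exact hx1 ▸ N.one_mem
    · exact hN.mem_of_isConj (hconj z x (hNp.isPElement hzN) hx hz1 hx1) hzN
  exact (Q.3 hNp fun x hx => hmem x (Q.2.isPElement hx)).symm

variable [Finite G]

theorem Subgroup.Normal.mul_comm_of_forall_isConj {N : Subgroup G} [hN : N.Normal]
    (hp : IsPGroup p N) (hconj : ∀ x ∈ N, ∀ y ∈ N, x ≠ 1 → y ≠ 1 → IsConj x y)
    {a b : G} (ha : a ∈ N) (hb : b ∈ N) : a * b = b * a := by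
  by_cases ha1 : a = 1
  · rw [ha1, one_mul, mul_one]
  have : Nontrivial N := ⟨⟨a, ha⟩, 1, fun h => ha1 (congrArg Subtype.val h)⟩
  have := hp.center_nontrivial
  obtain ⟨z, hz⟩ := exists_ne (1 : center N)
  have hzZ : ((z : N) : G) ∈ (center N).map N.subtype := mem_map_of_mem _ z.2
  have hz1 : ((z : N) : G) ≠ 1 := fun h => hz (Subtype.ext (Subtype.ext h))
  obtain ⟨a', ha', rfl⟩ := Normal.mem_of_isConj inferInstance
    (hconj _ (z : N).2 a ha hz1 ha1) hzZ
  exact congrArg Subtype.val (mem_center_iff.mp ha' ⟨b, hb⟩).symm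

theorem Sylow.le_of_le_centralizer (P : Sylow p G) {C : Subgroup G} [C.Normal]
    (hPC : (P : Subgroup G) ≤ C) (hC : C ≤ centralizer (P : Set G)) (h : pPrimeCore p G = ⊥) :
    C ≤ P := by
  -- Burnside's transfer theorem gives `P` a normal complement in `C`; it is a normal `p'`-subgroup.
  have hP' : normalizer (P.subtype hPC : Set C) ≤ centralizer (P.subtype hPC : Set C) :=
    fun c _ x hx => Subtype.ext (hC c.2 _ hx)
  have hCcore : pPrimeCore p C = ⊥ := by
    have : C.subtype.range.Normal := by rw [range_subtype]; infer_instance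
    by_contra hne
    exact pPrimeCore_ne_bot_of_injective _ (Subgroup.subtype_injective _) hne h
  have hker : (MonoidHom.transferSylow _ hP').ker = ⊥ := by
    rw [← le_bot_iff, ← hCcore]
    exact le_pPrimeCore (MonoidHom.not_dvd_card_ker_transferSylow _ hP')
  have hK := MonoidHom.ker_transferSylow_isComplement' _ hP'
  rw [hker, isComplement'_bot_left, Sylow.coe_subtype, subgroupOf_eq_top] at hK
  exact hK

end

/-- Let `G` be a finite `p`-solvable group with `O_{p'}(G) = 1` containing an element
of order `p` in which all non-trivial `p`-elements are conjugate.  Then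
`P := O_p(G)` is non-trivial, `P` is a Sylow `p`-subgroup of `G`, `P` is elementary
abelian, `C_G(P) = P`; consequently the conjugation action of `G/P` on `P` is faithful
(only elements of `P` act trivially on `P`) and transitive on `P ∖ {1}`. -/
theorem pCore_elementary_abelian_sylow_of_two_classes
    (p : ℕ) (hp : p.Prime) (G : Type*) [Group G] [Finite G]
    (hsolv : IsPSolvable p G)
    (hop' : pPrimeCore p G = ⊥)
    (hex : ∃ g : G, orderOf g = p)
    (hconj : ∀ x y : G, IsPElement p x → IsPElement p y → x ≠ 1 → y ≠ 1 → IsConj x y) :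
    pCore p G ≠ ⊥ ∧
    (∃ Q : Sylow p G, (Q : Subgroup G) = pCore p G) ∧
    (∀ g ∈ pCore p G, g ^ p = 1) ∧
    (∀ a ∈ pCore p G, ∀ b ∈ pCore p G, a * b = b * a) ∧
    Subgroup.centralizer ((pCore p G : Subgroup G) : Set G) = pCore p G ∧
    (∀ g : G, (∀ n ∈ pCore p G, g * n * g⁻¹ = n) → g ∈ pCore p G) ∧
    (∀ x ∈ pCore p G, ∀ y ∈ pCore p G, x ≠ 1 → y ≠ 1 → ∃ g : G, g * x * g⁻¹ = y) := by
  have := Fact.mk hp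
  obtain ⟨g₀, hg₀⟩ := hex
  have : Nontrivial G := ⟨g₀, 1, fun h => hp.ne_one (hg₀ ▸ orderOf_eq_one_iff.mpr h)⟩
  set P := pCore p G
  have hPp : IsPGroup p P := isPGroup_pCore
  have hPelem : ∀ x ∈ P, IsPElement p x := fun x => hPp.isPElement
  have hPne : P ≠ ⊥ := hsolv.pCore_ne_bot_or_pPrimeCore_ne_bot.resolve_right (not_not.mpr hop')
  obtain ⟨Q⟩ : Nonempty (Sylow p G) := inferInstance
  have hQ : (Q : Subgroup G) = P := Q.coe_eq_of_forall_isConj hPp hPne hconj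
  have hcomm : ∀ a ∈ P, ∀ b ∈ P, a * b = b * a := fun a ha b hb =>
    Normal.mul_comm_of_forall_isConj hPp (fun x hx y hy => hconj x y (hPelem x hx) (hPelem y hy))
      ha hb
  have hPC : P ≤ centralizer (P : Set G) := fun a ha b hb => hcomm b hb a ha
  have hCP : centralizer (P : Set G) = P := by
    have hCQ := Q.le_of_le_centralizer (C := centralizer (P : Set G)) (hQ ▸ hPC) (hQ ▸ le_rfl) hop'
    exact le_antisymm (hQ ▸ hCQ) hPC
  refine ⟨hPne, ⟨Q, hQ⟩, fun g hg => (hPelem g hg).pow_eq_one_of_forall_isConj hconj hg₀, hcomm,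
    hCP, fun g hg => ?_, fun x hx y hy hx1 hy1 => ?_⟩
  · exact hCP ▸ mem_centralizer_iff.mpr fun n hn => (mul_inv_eq_iff_eq_mul.mp (hg n hn)).symm
  · exact isConj_iff.mp (hconj x y (hPelem x hx) (hPelem y hy) hx1 hy1)
end

section
/- Let p be a prime, T a non-abelian finite simple group whose order is divisible by p, n ≥ 2 an integer, and G a finite group having a normal subgroup N isomorphic to the direct product of n copies of T. Then G has at least two conjugacy classes of non-trivial p-elements (i.e. k_p(G) ≥ 3). -/
/-- `k_p(G)`: the number of conjugacy classes of `G` consisting of `p`-elements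
(the class of the identity is counted). -/
noncomputable def kpEl (p : ℕ) (G : Type*) [Group G] : ℕ :=
  Nat.card {c : ConjClasses G // ∀ g ∈ c.carrier, IsPElement p g}

/-!
For `a ∈ N`, the order of the centralizer `C_N(a)` is unchanged when `a` is conjugated by an
element of `G`, because `N` is normal. Take `x ∈ T` of order `p`; it is not central since `T` is
simple and non-abelian, so `c := |C_T(x)| < |T|`. In `N ≅ T ^ n` the elements `(x, 1, …, 1)` and
`(x, x, 1, …, 1)` have centralizers of orders `c |T|^(n-1)` and `c² |T|^(n-2)`, which differ.
Hence they are non-conjugate non-trivial `p`-elements of `G`, and with the identity they give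
three classes of `p`-elements.
-/

open Subgroup Finset

section PElements

variable {p : ℕ} {G : Type*} [Group G]

lemma IsPElement.of_isConj {x y : G} (hx : IsPElement p x) (hxy : IsConj x y) :
    IsPElement p y := by
  obtain ⟨c, rfl⟩ := isConj_iff.mp hxy
  obtain ⟨k, hk⟩ := hx
  exact ⟨k, by rw [← hk]; exact MulEquiv.orderOf_eq (MulAut.conj c) x⟩

def IsPElement.conjClass {x : G} (hx : IsPElement p x) :
    {c : ConjClasses G // ∀ g ∈ c.carrier, IsPElement p g} :=
  ⟨ConjClasses.mk x, fun _ hg =>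
    hx.of_isConj (ConjClasses.mk_eq_mk_iff_isConj.mp (ConjClasses.mem_carrier_iff_mk_eq.mp hg).symm)⟩

lemma three_le_kpEl_of_not_isConj [Finite G] {x y : G} (hx : IsPElement p x) (hy : IsPElement p y)
    (hx1 : x ≠ 1) (hy1 : y ≠ 1) (hxy : ¬ IsConj x y) : 3 ≤ kpEl p G := by
  have h1 : IsPElement p (1 : G) := ⟨0, by simp⟩
  let classes : Fin 3 → {c : ConjClasses G // ∀ g ∈ c.carrier, IsPElement p g} :=
    ![h1.conjClass, hx.conjClass, hy.conjClass]
  have hinj : Function.Injective classes := by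
    have hyx : ¬ IsConj y x := fun h => hxy h.symm
    intro i j hij
    fin_cases i <;> fin_cases j <;>
      simp_all [classes, IsPElement.conjClass, ConjClasses.mk_eq_mk_iff_isConj, -isConj_iff]
  simpa [kpEl] using Nat.card_le_card_of_injective classes hinj

end PElements

section Centralizers

lemma Subgroup.card_centralizer_singleton_map {H K : Type*} [Group H] [Group K] (φ : H ≃* K)
    (h : H) : Nat.card (centralizer {φ h}) = Nat.card (centralizer {h}) :=
  Nat.card_congr <| (φ.toEquiv.subtypeEquiv fun g => by
    simp [mem_centralizer_singleton_iff, ← map_mul, φ.injective.eq_iff]).symm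

lemma Subgroup.card_centralizer_singleton_eq_of_isConj {G : Type*} [Group G] {N : Subgroup G}
    [N.Normal] {a b : N} (hab : IsConj (a : G) b) :
    Nat.card (centralizer {a}) = Nat.card (centralizer {b}) := by
  obtain ⟨c, hc⟩ := isConj_iff.mp hab
  have : MulAut.conjNormal c a = b := Subtype.ext (by rw [MulAut.conjNormal_apply, hc])
  rw [← this, card_centralizer_singleton_map]

lemma Subgroup.card_centralizer_singleton_pi {ι T : Type*} [Fintype ι] [Group T] (f : ι → T) :
    Nat.card (centralizer {f}) = ∏ i, Nat.card (centralizer {f i}) := by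
  rw [← Nat.card_pi]
  refine Nat.card_congr ((Equiv.subtypeEquivRight fun g => ?_).trans Equiv.subtypePiEquivPi)
  simp [mem_centralizer_singleton_iff, funext_iff]

lemma Subgroup.card_centralizer_lt_card {T : Type*} [Group T] [Finite T] {x : T}
    (hx : x ∉ center T) : Nat.card (centralizer {x}) < Nat.card T :=
  (card_le_card_group _).lt_of_ne fun h =>
    hx (centralizer_eq_top_iff_subset.mp (eq_top_of_card_eq _ h) rfl)

lemma IsSimpleGroup.center_eq_bot {T : Type*} [Group T] [IsSimpleGroup T]
    (hnab : ∃ a b : T, a * b ≠ b * a) : center T = ⊥ := by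
  refine (eq_bot_or_eq_top_of_normal _ inferInstance).resolve_right fun h => ?_
  obtain ⟨a, b, hab⟩ := hnab
  exact hab (mem_center_iff.mp (h ▸ mem_top b) a)

end Centralizers

section Piecewise

variable {ι T : Type*} [Group T] [DecidableEq ι]

lemma orderOf_piecewise_one {s : Finset ι} (hs : s.Nonempty) (x : T) :
    orderOf (s.piecewise (fun _ => x) 1) = orderOf x := by
  refine orderOf_eq_orderOf_iff.mpr fun k => ?_
  obtain ⟨i, hi⟩ := hs
  refine ⟨fun h => ?_, fun h => funext fun j => ?_⟩
  · simpa [piecewise_eq_of_mem _ _ _ hi] using congrFun h i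
  · by_cases hj : j ∈ s <;> simp [hj, h]

lemma card_centralizer_piecewise_one [Fintype ι] [Finite T] (s : Finset ι) (x : T) :
    Nat.card (centralizer {s.piecewise (fun _ => x) 1}) =
      Nat.card (centralizer {x}) ^ #s * Nat.card T ^ #sᶜ := by
  rw [card_centralizer_singleton_pi]
  have : ∀ i, Nat.card (centralizer {s.piecewise (fun _ => x) 1 i}) =
      s.piecewise (fun _ => Nat.card (centralizer {x})) (fun _ => Nat.card T) i := by
    intro i
    by_cases hi : i ∈ s <;> simp [hi]
  simp [this, prod_piecewise, compl_eq_univ_sdiff]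

end Piecewise

lemma mul_pow_succ_ne_sq_mul_pow {c M : ℕ} (hc : 0 < c) (hcM : c < M) (k : ℕ) :
    c * M ^ (k + 1) ≠ c ^ 2 * M ^ k := by
  have hM : 0 < M ^ k := pow_pos (hc.trans hcM) k
  rw [pow_succ, sq]
  nlinarith [Nat.mul_lt_mul_of_pos_right (Nat.mul_lt_mul_of_pos_left hcM hc) hM]

/-- Let `p` be a prime, `T` a non-abelian finite simple group of order divisible by
`p`, `n ≥ 2`, and `G` a finite group with a normal subgroup `N` isomorphic to the
direct product of `n` copies of `T`.  Then `G` has at least two conjugacy classes of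
non-trivial `p`-elements, i.e. `k_p(G) ≥ 3`. -/
theorem kp_ge_three_of_normal_power_of_simple
    (p : ℕ) (hp : p.Prime) (T : Type*) [Group T] [Finite T]
    (hT : IsSimpleGroup T) (hnab : ∃ a b : T, a * b ≠ b * a)
    (hpT : p ∣ Nat.card T)
    (n : ℕ) (hn : 2 ≤ n)
    (G : Type*) [Group G] [Finite G] (N : Subgroup G) (hN : N.Normal)
    (hiso : Nonempty (N ≃* (Fin n → T))) :
    (∃ x y : G, IsPElement p x ∧ x ≠ 1 ∧ IsPElement p y ∧ y ≠ 1 ∧ ¬ IsConj x y) ∧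
    3 ≤ kpEl p G := by
  have := Fact.mk hp
  obtain ⟨x, hx⟩ := exists_prime_orderOf_dvd_card' p hpT
  have hxZ : x ∉ center T := by
    rw [hT.center_eq_bot hnab, mem_bot, ← orderOf_eq_one_iff, hx]
    exact hp.ne_one
  obtain ⟨e⟩ := hiso
  obtain ⟨k, rfl⟩ : ∃ k, n = k + 2 := ⟨n - 2, by omega⟩
  let embed (s : Finset (Fin (k + 2))) : N := e.symm (s.piecewise (fun _ => x) 1)
  have horder (s) (hs : s.Nonempty) : orderOf (embed s : G) = p := by
    rw [orderOf_coe, MulEquiv.orderOf_eq, orderOf_piecewise_one hs, hx]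
  have hcard (s) : Nat.card (centralizer {embed s}) =
      Nat.card (centralizer {x}) ^ #s * Nat.card T ^ (k + 2 - #s) := by
    rw [card_centralizer_singleton_map, card_centralizer_piecewise_one, card_compl,
      Fintype.card_fin]
  set a := embed {0}
  set b := embed {0, 1}
  have hnc : ¬ IsConj (a : G) b := fun hab => by
    have := card_centralizer_singleton_eq_of_isConj hab
    rw [hcard, hcard, card_singleton, card_pair (by simp)] at this
    exact mul_pow_succ_ne_sq_mul_pow Nat.card_pos (card_centralizer_lt_card hxZ) k
      (by simpa using this)
  have hpel (s) (hs : s.Nonempty) : IsPElement p (embed s : G) ∧ (embed s : G) ≠ 1 := by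
    refine ⟨⟨1, by rw [horder s hs, pow_one]⟩, ?_⟩
    rw [Ne, ← orderOf_eq_one_iff, horder s hs]
    exact hp.ne_one
  obtain ⟨hPa, ha⟩ := hpel {0} (singleton_nonempty 0)
  obtain ⟨hPb, hb⟩ := hpel {0, 1} (insert_nonempty 0 {1})
  exact ⟨⟨a, b, hPa, ha, hPb, hb, hnc⟩, three_le_kpEl_of_not_isConj hPa hPb ha hb hnc⟩
end
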